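/- arXiv:2212.04278 — 3 statements merged into one kernel-verified Lean document; each statement's English description precedes it below -/
import Mathlib

section
/- For each contraction f over a complete partial metric space (X,p) there exists a unique x ∈ X such that x = f(x), and moreover p(x,x) = 0. -/
open Filter Topology Set ENNReal

/-- A partial metric on `X` (Matthews' axioms P1–P4). -/
structure PartialMetricOn (X : Type*) where
  p : X → X → ℝ
  nonneg_self : ∀ x, 0 ≤ p x x
  self_le : ∀ x y, p x x ≤ p x y
  eq_of_indist : ∀ x y, p x x = p x y → p x y = p y y → x = y
  symm : ∀ x y, p x y = p y x
  triangle : ∀ x y z, p x z ≤ p x y + p y z - p y y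

variable {X : Type*}

/-- A sequence is Cauchy if `p (a m) (a n)` converges as `m, n → ∞`. -/
def PartialMetricOn.IsCauchySeq (P : PartialMetricOn X) (a : ℕ → X) : Prop :=
  ∃ l : ℝ, Tendsto (fun mn : ℕ × ℕ => P.p (a mn.1) (a mn.2)) atTop (nhds l)

/-- Convergence in a partial metric space: `lim p (a n) x = p x x`. -/
def PartialMetricOn.ConvergesTo (P : PartialMetricOn X) (a : ℕ → X) (x : X) : Prop :=
  Tendsto (fun n => P.p (a n) x) atTop (nhds (P.p x x))

/-- Completeness: every Cauchy sequence converges, with `lim p (a m) (a n) = p x x`. -/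
def PartialMetricOn.Complete (P : PartialMetricOn X) : Prop :=
  ∀ a : ℕ → X, P.IsCauchySeq a → ∃ x, P.ConvergesTo a x ∧
    Tendsto (fun mn : ℕ × ℕ => P.p (a mn.1) (a mn.2)) atTop (nhds (P.p x x))

/-- The topology induced by a partial metric, generated by the open balls
`{y | p x y < p x x + ε}`. -/
def PartialMetricOn.topology (P : PartialMetricOn X) : TopologicalSpace X :=
  TopologicalSpace.generateFrom {s | ∃ x ε, 0 < ε ∧ s = {y | P.p x y < P.p x x + ε}}

/-- The Lipschitz constant `Lip_p f = sup_{x ≠ y} p (f x) (f y) / p x y ∈ [0,∞]`. -/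
noncomputable def PartialMetricOn.lip (P : PartialMetricOn X) (f : X → X) : ℝ≥0∞ :=
  ⨆ q : {q : X × X // q.1 ≠ q.2}, ENNReal.ofReal (P.p (f q.1.1) (f q.1.2) / P.p q.1.1 q.1.2)

/-- The diameter `diam A = sup_{x,y ∈ A} p x y ∈ [0,∞]`. -/
noncomputable def PartialMetricOn.diam (P : PartialMetricOn X) (A : Set X) : ℝ≥0∞ :=
  ⨆ x ∈ A, ⨆ y ∈ A, ENNReal.ofReal (P.p x y)

/-- `ρ_p(A,B) = sup_{x ∈ A} inf_{y ∈ B} p x y`. -/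
noncomputable def PartialMetricOn.rho (P : PartialMetricOn X) (A B : Set X) : ℝ :=
  sSup ((fun x => sInf ((fun y => P.p x y) '' B)) '' A)

/-- The Hausdorff partial metric `h_p(A,B) = max {ρ_p(A,B), ρ_p(B,A)}`. -/
noncomputable def PartialMetricOn.hp (P : PartialMetricOn X) (A B : Set X) : ℝ :=
  max (P.rho A B) (P.rho B A)

/-- `wordComp f w m = f_{w 0} ∘⋯-style composition: the map `f_{[w]_m}`. -/
def wordComp {ι : Type*} (f : ι → X → X) (w : ℕ → ι) : ℕ → X → X
  | 0 => id
  | (m+1) => (wordComp f w m) ∘ (f (w m))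


theorem stmt3 [Nonempty X] (P : PartialMetricOn X) (hC : P.Complete) (f : X → X) (c : ℝ)
    (hc0 : 0 ≤ c) (hc1 : c < 1) (hf : ∀ x y, P.p (f x) (f y) ≤ c * P.p x y) :
    ∃ x : X, f x = x ∧ P.p x x = 0 ∧ ∀ y : X, f y = y → y = x := by
  classical
  obtain ⟨x0⟩ := (inferInstance : Nonempty X)
  set a : ℕ → X := fun n => f^[n] x0 with ha
  have hnn : ∀ x y, 0 ≤ P.p x y := fun x y => le_trans (P.nonneg_self x) (P.self_le x y)
  have h1c : (0:ℝ) < 1 - c := by linarith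
  set D := P.p x0 (f x0) with hD
  have hDnn : 0 ≤ D := hnn _ _
  set K := D / (1 - c) with hK
  have hKnn : 0 ≤ K := div_nonneg hDnn h1c.le
  have hDK : D + c * K = K := by
    have hKD : K * (1 - c) = D := by rw [hK]; exact div_mul_cancel₀ D h1c.ne'
    linear_combination -hKD
  have hDleK : D ≤ K := by nlinarith [mul_nonneg hc0 hKnn]
  have e : ∀ n, f (a n) = a (n+1) := fun n => (Function.iterate_succ_apply' f n x0).symm
  have hstep : ∀ n, P.p (a n) (a (n+1)) ≤ c ^ n * D := by
    intro n
    induction n with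
    | zero => simp [ha, hD]
    | succ n ih =>
      have h1 : P.p (f (a n)) (f (a (n+1))) ≤ c * P.p (a n) (a (n+1)) := hf _ _
      rw [e n, e (n+1)] at h1
      calc P.p (a (n+1)) (a (n+2)) ≤ c * (c ^ n * D) := by nlinarith [hnn (a n) (a (n+1))]
        _ = c ^ (n+1) * D := by ring
  have hchain : ∀ k m, P.p (a m) (a (m + k)) ≤ c ^ m * K := by
    intro k
    induction k with
    | zero =>
      intro m
      have h1 : P.p (a m) (a m) ≤ P.p (a m) (a (m+1)) := P.self_le _ _
      have h2 := hstep m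
      have h3 : (0:ℝ) ≤ c ^ m := pow_nonneg hc0 m
      have h4 : c ^ m * D ≤ c ^ m * K := mul_le_mul_of_nonneg_left hDleK h3
      simpa using le_trans (le_trans h1 h2) h4
    | succ k ih =>
      intro m
      have htri : P.p (a m) (a (m + (k+1))) ≤
          P.p (a m) (a (m+1)) + P.p (a (m+1)) (a (m+1+k)) - P.p (a (m+1)) (a (m+1)) := by
        have := P.triangle (a m) (a (m+1)) (a (m + (k+1)))
        have hidx : m + (k+1) = m + 1 + k := by omega
        rw [hidx]
        rw [hidx] at this
        exact this
      have h1 := hstep m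
      have h2 := ih (m+1)
      have h3 := hnn (a (m+1)) (a (m+1))
      have h4 : c ^ m * D + c ^ (m+1) * K = c ^ (m+1) * K + c ^ m * D := by ring
      have h5 : c ^ m * D + c ^ (m+1) * K = c ^ m * K := by
        linear_combination (c ^ m) * hDK
      calc P.p (a m) (a (m + (k+1)))
          ≤ P.p (a m) (a (m+1)) + P.p (a (m+1)) (a (m+1+k)) - P.p (a (m+1)) (a (m+1)) := htri
        _ ≤ c ^ m * D + c ^ (m+1) * K := by linarith
        _ = c ^ m * K := h5
  have hbound : ∀ m n : ℕ, P.p (a m) (a n) ≤ c ^ (min m n) * K := by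
    intro m n
    rcases le_total m n with h | h
    · rw [min_eq_left h]
      have := hchain (n - m) m
      rwa [Nat.add_sub_cancel' h] at this
    · rw [min_eq_right h]
      have := hchain (m - n) n
      rw [Nat.add_sub_cancel' h] at this
      rwa [P.symm]
  have hmin : Tendsto (fun mn : ℕ × ℕ => min mn.1 mn.2) atTop atTop := by
    refine tendsto_atTop.2 fun b => ?_
    filter_upwards [eventually_ge_atTop ((b, b) : ℕ × ℕ)] with mn h
    exact le_min h.1 h.2
  have geom : Tendsto (fun n : ℕ => c ^ n * K) atTop (nhds 0) := by
    have := (tendsto_pow_atTop_nhds_zero_of_lt_one hc0 hc1).mul_const K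
    simpa using this
  have upper : Tendsto (fun mn : ℕ × ℕ => c ^ (min mn.1 mn.2) * K) atTop (nhds 0) :=
    geom.comp hmin
  have htend : Tendsto (fun mn : ℕ × ℕ => P.p (a mn.1) (a mn.2)) atTop (nhds 0) :=
    tendsto_of_tendsto_of_tendsto_of_le_of_le tendsto_const_nhds upper
      (fun mn => hnn _ _) (fun mn => hbound _ _)
  obtain ⟨x, hconv, hlim⟩ := hC a ⟨0, htend⟩
  have hxx : P.p x x = 0 := tendsto_nhds_unique hlim htend
  rw [PartialMetricOn.ConvergesTo, hxx] at hconv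
  have hshift : Tendsto (fun n => P.p (a (n+1)) x) atTop (nhds 0) :=
    hconv.comp (tendsto_add_atTop_nat 1)
  have hg : Tendsto (fun n => P.p (a (n+1)) x + c * P.p (a n) x) atTop (nhds 0) := by
    have := hshift.add (hconv.const_mul c)
    simpa using this
  have hfx : P.p x (f x) ≤ 0 := by
    refine ge_of_tendsto' hg fun n => ?_
    have htri := P.triangle x (a (n+1)) (f x)
    have h1 : P.p (a (n+1)) (f x) ≤ c * P.p (a n) x := by
      have := hf (a n) x
      rwa [e n] at this
    have h2 := hnn (a (n+1)) (a (n+1))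
    have h3 : P.p x (a (n+1)) = P.p (a (n+1)) x := P.symm _ _
    linarith
  have hpxfx : P.p x (f x) = 0 := le_antisymm hfx (hxx ▸ P.self_le x (f x))
  have hffx : P.p (f x) (f x) = 0 := by
    have h1 := hf x x
    have h2 := hnn (f x) (f x)
    rw [hxx] at h1
    linarith
  have hfix : f x = x := by
    have := P.eq_of_indist x (f x) (by rw [hxx, hpxfx]) (by rw [hpxfx, hffx])
    exact this.symm
  refine ⟨x, hfix, hxx, fun y hy => ?_⟩
  have hyx : P.p y x ≤ c * P.p y x := by
    have := hf y x
    rwa [hy, hfix] at this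
  have hyx0 : P.p y x = 0 := by nlinarith [hnn y x]
  have hyy0 : P.p y y = 0 := le_antisymm (hyx0 ▸ P.self_le y x) (P.nonneg_self y)
  exact P.eq_of_indist y x (by rw [hyy0, hyx0]) (by rw [hyx0, hxx])
end

section
/- On X = ℝ≥0 with the partial metric p(x,y) = max{x,y}, the constant map w₀ on the hyperspace of nonempty compact sets sending every B to C = [3,4] is not a contraction with respect to the Hausdorff partial metric h_p: there exist B₁ = [0,1] and B₂ = [2,3] with h_p(w₀(B₁), w₀(B₂)) = 4 > 3 = h_p(B₁,B₂). -/
open Filter Topology Set ENNReal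

variable {X : Type*}

open scoped NNReal

noncomputable def maxPartialMetric : PartialMetricOn ℝ≥0 where
  p x y := ((max x y : ℝ≥0) : ℝ)
  nonneg_self x := NNReal.coe_nonneg _
  self_le x y := by simp
  eq_of_indist x y hx hy := by
    simp only [max_self, NNReal.coe_inj] at hx hy
    exact hx.trans hy
  symm x y := by rw [max_comm]
  triangle x y z := by
    simp only [max_self, NNReal.coe_max]
    exact max_le (by linarith [le_max_left (x : ℝ) y, le_max_left (y : ℝ) z])
      (by linarith [le_max_right (x : ℝ) y, le_max_right (y : ℝ) z])

lemma maxPartialMetric_rho_Icc {a b c d : ℝ≥0} (hab : a ≤ b) (hcd : c ≤ d) :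
    maxPartialMetric.rho (Icc c d) (Icc a b) = ((max d a : ℝ≥0) : ℝ) := by
  have hmono : ∀ z : ℝ≥0, Monotone (fun x => ((max x z : ℝ≥0) : ℝ)) :=
    fun z _ _ h => NNReal.coe_le_coe.2 (max_le_max_right z h)
  have hinf : ∀ x, sInf ((fun y => maxPartialMetric.p x y) '' Icc a b) = ((max x a : ℝ≥0) : ℝ) := by
    intro x
    simp only [maxPartialMetric, max_comm x]
    exact ((hmono x).map_isLeast (isLeast_Icc hab)).csInf_eq
  simp only [PartialMetricOn.rho, hinf]
  exact ((hmono a).map_isGreatest (isGreatest_Icc hcd)).csSup_eq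

lemma maxPartialMetric_hp_Icc {a b c d : ℝ≥0} (hab : a ≤ b) (hcd : c ≤ d) :
    maxPartialMetric.hp (Icc a b) (Icc c d) = ((max (max b c) (max d a) : ℝ≥0) : ℝ) := by
  rw [PartialMetricOn.hp, maxPartialMetric_rho_Icc hcd hab, maxPartialMetric_rho_Icc hab hcd,
    ← NNReal.coe_max]

/-- On `ℝ≥0` with `p x y = max x y`, the constant map `B ↦ [3,4]` on the hyperspace is not a
contraction for the Hausdorff partial metric. -/
theorem stmt9 :
    ∃ P : PartialMetricOn NNReal, (∀ x y : NNReal, P.p x y = ((max x y : NNReal) : ℝ)) ∧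
      P.hp (Set.Icc 3 4) (Set.Icc 3 4) = 4 ∧
      P.hp (Set.Icc 0 1) (Set.Icc 2 3) = 3 ∧
      ∀ s : ℝ, s < 1 →
        ¬ P.hp (Set.Icc 3 4) (Set.Icc 3 4) ≤ s * P.hp (Set.Icc 0 1) (Set.Icc 2 3) := by
  have hC : maxPartialMetric.hp (Icc 3 4) (Icc 3 4) = 4 := by
    rw [maxPartialMetric_hp_Icc (by norm_num) (by norm_num)]
    norm_num
  have hB : maxPartialMetric.hp (Icc 0 1) (Icc 2 3) = 3 := by
    rw [maxPartialMetric_hp_Icc (by norm_num) (by norm_num)]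
    norm_num
  refine ⟨maxPartialMetric, fun _ _ => rfl, hC, hB, fun s hs => ?_⟩
  rw [hC, hB]
  linarith
end

section
/- Collage theorem in a partial metric space: Let (X,p) be a complete partial metric space, L a nonempty compact subset, ε ≥ 0, and {X; w₁,…,wₙ} a partial IFS with contractivity factor 0 ≤ s < 1 whose attractor is A. If h_p(L, ⋃_{m=1}^n w_m(L)) ≤ ε, then h_p(L, A) ≤ ε/(1−s). Equivalently, h_p(L,A) ≤ (1−s)^{-1} h_p(L, ⋃_m w_m(L)) for all nonempty compact L. -/
open Filter Topology Set ENNReal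

variable {X : Type*}

/-! Since `A = W(A)` and `W` contracts `h_p` by the factor `s`, the triangle inequality gives
`h_p(L, A) ≤ h_p(L, W L) + h_p(W L, W A) ≤ ε + s h_p(L, A)`. The triangle inequality for `ρ_p`
needs the suprema defining it to be finite (`sSup` of an unbounded set of reals is `0`); they are,
because compact sets, and their images under `W`, are bounded for `p`. -/

namespace PartialMetricOn

open scoped Pointwise

variable (P : PartialMetricOn X)

lemma p_nonneg (x y : X) : 0 ≤ P.p x y :=
  (P.nonneg_self x).trans (P.self_le x y)

noncomputable def infDist (x : X) (B : Set X) : ℝ :=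
  sInf (P.p x '' B)

lemma infDist_le (x : X) {B : Set X} {y : X} (hy : y ∈ B) : P.infDist x B ≤ P.p x y :=
  csInf_le ⟨0, by rintro _ ⟨z, -, rfl⟩; exact P.p_nonneg x z⟩ (mem_image_of_mem _ hy)

lemma le_infDist {x : X} {B : Set X} {c : ℝ} (hB : B.Nonempty) (h : ∀ y ∈ B, c ≤ P.p x y) :
    c ≤ P.infDist x B :=
  le_csInf (hB.image _) (forall_mem_image.2 h)

lemma infDist_nonneg (x : X) {B : Set X} (hB : B.Nonempty) : 0 ≤ P.infDist x B :=
  P.le_infDist hB fun y _ => P.p_nonneg x y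

lemma infDist_le_add_infDist {C : Set X} (hC : C.Nonempty) (x y : X) :
    P.infDist x C ≤ P.p x y + P.infDist y C := by
  have : P.infDist x C - P.p x y ≤ P.infDist y C := P.le_infDist hC fun z hz => by
    linarith [P.triangle x y z, P.infDist_le x hz, P.nonneg_self y]
  linarith

lemma rho_nonneg (A : Set X) {B : Set X} (hB : B.Nonempty) : 0 ≤ P.rho A B :=
  Real.sSup_nonneg (forall_mem_image.2 fun x _ => P.infDist_nonneg x hB)

lemma rho_le {A B : Set X} {c : ℝ} (hc : 0 ≤ c) (h : ∀ x ∈ A, P.infDist x B ≤ c) :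
    P.rho A B ≤ c :=
  Real.sSup_le (forall_mem_image.2 h) hc

def Bounded (K : Set X) : Prop :=
  BddAbove (image2 P.p K K)

lemma bounded_of_forall_le {K : Set X} (c : X) (M : ℝ) (h : ∀ x ∈ K, P.p x c ≤ M) :
    P.Bounded K := by
  refine ⟨M + M, ?_⟩
  rintro _ ⟨x, hx, y, hy, rfl⟩
  linarith [P.triangle x c y, P.symm c y, P.nonneg_self c, h x hx, h y hy]

lemma bounded_of_isCompact {K : Set X} (hK : @IsCompact X P.topology K) : P.Bounded K := by
  let := P.topology
  have hball : ∀ x : X, IsOpen {y | P.p x y < P.p x x + 1} := fun x =>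
    TopologicalSpace.GenerateOpen.basic _ ⟨x, 1, one_pos, rfl⟩
  have hcover : K ⊆ ⋃ x ∈ K, {y | P.p x y < P.p x x + 1} := fun x hx =>
    mem_biUnion hx (by linarith [P.nonneg_self x] : P.p x x < P.p x x + 1)
  obtain ⟨t, -, ht, htK⟩ := hK.elim_finite_subcover_image (fun x _ => hball x) hcover
  obtain ⟨C, hC⟩ := (ht.image2 P.p ht).bddAbove
  refine ⟨C + 2, ?_⟩
  rintro _ ⟨x, hx, y, hy, rfl⟩
  obtain ⟨i, hi, hxi : P.p i x < P.p i i + 1⟩ := mem_iUnion₂.1 (htK hx)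
  obtain ⟨j, hj, hyj : P.p j y < P.p j j + 1⟩ := mem_iUnion₂.1 (htK hy)
  linarith [ P.triangle x i y, P.triangle i j y,
    P.symm i x, hC (mem_image2_of_mem hi hj)]

lemma infDist_le_rho {A B : Set X} (hA : P.Bounded A) {x : X} (hx : x ∈ A) (hB : B.Nonempty) :
    P.infDist x B ≤ P.rho A B := by
  obtain ⟨M, hM⟩ := hA
  obtain ⟨y, hy⟩ := hB
  refine le_csSup ⟨M + P.p x y, forall_mem_image.2 fun x' hx' => ?_⟩ (mem_image_of_mem _ hx)
  change P.infDist x' B ≤ _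
  linarith [P.infDist_le x' hy, P.triangle x' x y, P.nonneg_self x,
    hM (mem_image2_of_mem hx' hx)]

lemma rho_triangle {A B C : Set X} (hA : P.Bounded A) (hB : P.Bounded B) (hBne : B.Nonempty)
    (hCne : C.Nonempty) : P.rho A C ≤ P.rho A B + P.rho B C := by
  refine P.rho_le (add_nonneg (P.rho_nonneg A hBne) (P.rho_nonneg B hCne)) fun x hx => ?_
  have : P.infDist x C - P.rho B C ≤ P.infDist x B := P.le_infDist hBne fun y hy => by
    linarith [P.infDist_le_add_infDist hCne x y, P.infDist_le_rho hB hy hCne]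
  linarith [P.infDist_le_rho hA hx hBne]

lemma hp_triangle {A B C : Set X} (hA : P.Bounded A) (hB : P.Bounded B) (hC : P.Bounded C)
    (hAne : A.Nonempty) (hBne : B.Nonempty) (hCne : C.Nonempty) :
    P.hp A C ≤ P.hp A B + P.hp B C := by
  unfold hp
  exact max_le
    (by linarith [P.rho_triangle hA hB hBne hCne, le_max_left (P.rho A B) (P.rho B A),
      le_max_left (P.rho B C) (P.rho C B)])
    (by linarith [P.rho_triangle hC hB hBne hAne, le_max_right (P.rho A B) (P.rho B A),
      le_max_right (P.rho B C) (P.rho C B)])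

section Contraction

variable {ι : Type*} (w : ι → X → X) {s : ℝ} (hs0 : 0 ≤ s)
  (hw : ∀ j x y, P.p (w j x) (w j y) ≤ s * P.p x y)
include hs0 hw

lemma infDist_iUnion_image_le {C : Set X} (hC : C.Nonempty) (j : ι) (x : X) :
    P.infDist (w j x) (⋃ i, w i '' C) ≤ s * P.infDist x C :=
  calc P.infDist (w j x) (⋃ i, w i '' C) ≤ sInf (s • (P.p x '' C)) := by
        refine le_csInf (hC.image _).smul_set ?_
        rintro _ ⟨_, ⟨y, hy, rfl⟩, rfl⟩
        exact (P.infDist_le _ (mem_iUnion.2 ⟨j, mem_image_of_mem _ hy⟩)).trans (hw j x y)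
    _ = s * P.infDist x C := Real.sInf_smul_of_nonneg hs0 _

lemma rho_iUnion_image_le {B C : Set X} (hB : P.Bounded B) (hC : C.Nonempty) :
    P.rho (⋃ i, w i '' B) (⋃ i, w i '' C) ≤ s * P.rho B C := by
  refine P.rho_le (mul_nonneg hs0 (P.rho_nonneg B hC)) fun u hu => ?_
  obtain ⟨j, x, hx, rfl⟩ := mem_iUnion.1 hu
  exact (P.infDist_iUnion_image_le w hs0 hw hC j x).trans
    (mul_le_mul_of_nonneg_left (P.infDist_le_rho hB hx hC) hs0)

lemma hp_iUnion_image_le {B C : Set X} (hB : P.Bounded B) (hC : P.Bounded C)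
    (hBne : B.Nonempty) (hCne : C.Nonempty) :
    P.hp (⋃ i, w i '' B) (⋃ i, w i '' C) ≤ s * P.hp B C :=
  max_le
    ((P.rho_iUnion_image_le w hs0 hw hB hCne).trans
      (mul_le_mul_of_nonneg_left (le_max_left _ _) hs0))
    ((P.rho_iUnion_image_le w hs0 hw hC hBne).trans
      (mul_le_mul_of_nonneg_left (le_max_right _ _) hs0))

lemma Bounded.iUnion_image [Finite ι] {K : Set X} (hK : P.Bounded K) (hKne : K.Nonempty) :
    P.Bounded (⋃ i, w i '' K) := by
  obtain ⟨x₀, hx₀⟩ := hKne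
  obtain ⟨M, hM⟩ := hK
  obtain ⟨C, hC⟩ := (finite_range fun i => P.p (w i x₀) x₀).bddAbove
  refine P.bounded_of_forall_le x₀ (s * M + C) fun u hu => ?_
  obtain ⟨i, x, hx, rfl⟩ := mem_iUnion.1 hu
  linarith [P.triangle (w i x) (w i x₀) x₀, P.nonneg_self (w i x₀), hw i x x₀,
    mul_le_mul_of_nonneg_left (hM (mem_image2_of_mem hx hx₀)) hs0, hC (mem_range_self i)]

end Contraction

end PartialMetricOn

theorem stmt17_general {n : ℕ} (P : PartialMetricOn X)
    (w : Fin n → X → X) (s : ℝ) (hs0 : 0 ≤ s) (hs1 : s < 1)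
    (hw : ∀ j x y, P.p (w j x) (w j y) ≤ s * P.p x y)
    (A : Set X) (hAne : A.Nonempty) (hAcomp : @IsCompact X P.topology A)
    (hA : A = ⋃ j, w j '' A)
    (L : Set X) (hLne : L.Nonempty) (hLcomp : @IsCompact X P.topology L)
    (ε : ℝ) (hcol : P.hp L (⋃ j, w j '' L) ≤ ε) :
    P.hp L A ≤ ε / (1 - s) := by
  have hAb := P.bounded_of_isCompact hAcomp
  have hLb := P.bounded_of_isCompact hLcomp
  have hWLb := hLb.iUnion_image P w hs0 hw hLne
  have hWLne : (⋃ j, w j '' L).Nonempty := by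
    obtain ⟨j, -⟩ := nonempty_iUnion.1 (hA ▸ hAne)
    exact nonempty_iUnion.2 ⟨j, hLne.image _⟩
  have key : P.hp L A ≤ ε + s * P.hp L A :=
    calc P.hp L A ≤ P.hp L (⋃ j, w j '' L) + P.hp (⋃ j, w j '' L) (⋃ j, w j '' A) := by
          conv_lhs => rw [hA]
          exact P.hp_triangle hLb hWLb (hA ▸ hAb) hLne hWLne (hA ▸ hAne)
      _ ≤ ε + s * P.hp L A := add_le_add hcol (P.hp_iUnion_image_le w hs0 hw hLb hAb hLne hAne)
  rw [le_div_iff₀ (sub_pos.2 hs1)]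
  linarith

/-- Collage theorem in a partial metric space. -/
theorem stmt17 {n : ℕ} (P : PartialMetricOn X) (hC : P.Complete)
    (w : Fin n → X → X) (s : ℝ) (hs0 : 0 ≤ s) (hs1 : s < 1)
    (hw : ∀ j x y, P.p (w j x) (w j y) ≤ s * P.p x y)
    (A : Set X) (hAne : A.Nonempty) (hAcomp : @IsCompact X P.topology A)
    (hA : A = ⋃ j, w j '' A)
    (L : Set X) (hLne : L.Nonempty) (hLcomp : @IsCompact X P.topology L)
    (ε : ℝ) (hε : 0 ≤ ε) (hcol : P.hp L (⋃ j, w j '' L) ≤ ε) :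
    P.hp L A ≤ ε / (1 - s) :=
  stmt17_general P w s hs0 hs1 hw A hAne hAcomp hA L hLne hLcomp ε hcol
end
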